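/- arXiv:2105.01310 — 2 statements merged into one kernel-verified Lean document; each statement's English description precedes it below -/
import Mathlib

section
/- For m = 4 with initial values (a_1,a_2,a_3) = (a,b,a), where a and b are positive integers, the expected value of T satisfies E[T] ≤ 4b(a − 1/2) = 2b(2a − 1). -/
open MeasureTheory ProbabilityTheory
open scoped ENNReal

/-!
The potential `V(A, B, C) = 2B(A + C - 1)` is nonnegative on the positive orthant and satisfies
`E[V(X + ξ)] = V(X) - 1` there. Each step moves a coordinate by at most one, so the walk stays in
the positive orthant before the tie time `T`. With `S n` the event of staying in the orthant up to
time `n`, independence of the next step from the past gives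
`E[V(X (n+1)); S (n+1)] + P(S n) ≤ E[V(X n); S n]`; telescoping yields
`E[T] ≤ ∑ P(S n) ≤ V(a, b, a) = 2b(2a - 1)`.
-/

section Independence

variable {Ω β γ : Type*} {mΩ : MeasurableSpace Ω} [MeasurableSpace β] [MeasurableSpace γ]
  {μ : Measure Ω} [IsFiniteMeasure μ] {Y : Ω → β} {Z : Ω → γ}

theorem ProbabilityTheory.IndepFun.lintegral_comp_eq_lintegral_lintegral (hYZ : IndepFun Y Z μ)
    (hY : Measurable Y) (hZ : Measurable Z) {h : β × γ → ℝ≥0∞} (hh : Measurable h) :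
    ∫⁻ ω, h (Y ω, Z ω) ∂μ = ∫⁻ ω, ∫⁻ ω', h (Y ω, Z ω') ∂μ ∂μ := by
  rw [← lintegral_map hh (hY.prodMk hZ),
    (indepFun_iff_map_prod_eq_prod_map_map hY.aemeasurable hZ.aemeasurable).1 hYZ,
    lintegral_prod _ hh.aemeasurable, lintegral_map (hh.lintegral_prod_right') hY]
  refine lintegral_congr fun ω => ?_
  exact lintegral_map (hh.comp measurable_prodMk_left) hZ

theorem setLIntegral_comp_eq_setLIntegral_lintegral_of_indep {ℱ : MeasurableSpace Ω}
    (hℱ : ℱ ≤ mΩ) (hind : Indep ℱ (MeasurableSpace.comap Z inferInstance) μ) {E : Set Ω}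
    (hE : MeasurableSet[ℱ] E) (hY : Measurable[ℱ] Y) (hZ : Measurable[mΩ] Z) {h : β × γ → ℝ≥0∞}
    (hh : Measurable h) :
    ∫⁻ ω in E, h (Y ω, Z ω) ∂μ = ∫⁻ ω in E, ∫⁻ ω', h (Y ω, Z ω') ∂μ ∂μ := by
  set W : Ω → ℝ≥0∞ × β := fun ω => (E.indicator 1 ω, Y ω)
  have hW : Measurable[ℱ] W := (measurable_one.indicator hE).prodMk hY
  have hWZ : IndepFun W Z μ :=
    (IndepFun_iff_Indep _ _ _).2 (indep_of_indep_of_le_left hind hW.comap_le)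
  have key := hWZ.lintegral_comp_eq_lintegral_lintegral (hW.mono hℱ le_rfl) hZ
    (h := fun p => p.1.1 * h (p.1.2, p.2))
    (measurable_fst.fst.mul (hh.comp (measurable_fst.snd.prodMk measurable_snd)))
  have hweight : ∀ (ω : Ω) (c : ℝ≥0∞), E.indicator 1 ω * c = E.indicator (fun _ => c) ω := by
    intro ω c
    by_cases hω : ω ∈ E <;> simp [hω]
  rw [← lintegral_indicator (hℱ _ hE), ← lintegral_indicator (hℱ _ hE)]
  simp only [W, hweight] at key
  refine key.trans (lintegral_congr fun ω => ?_)
  by_cases hω : ω ∈ E <;> simp [hω]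

end Independence

theorem ENNReal.tsum_le_of_succ_add_le {u e : ℕ → ℝ≥0∞} (h : ∀ n, u (n + 1) + e n ≤ u n) :
    ∑' n, e n ≤ u 0 := by
  have hpartial : ∀ N, ∑ n ∈ Finset.range N, e n + u N ≤ u 0 := by
    intro N
    induction N with
    | zero => simp
    | succ N ih =>
      calc ∑ n ∈ Finset.range (N + 1), e n + u (N + 1)
          = ∑ n ∈ Finset.range N, e n + (u (N + 1) + e N) := by
            rw [Finset.sum_range_succ]; ring
        _ ≤ ∑ n ∈ Finset.range N, e n + u N := by gcongr; exact h N
        _ ≤ u 0 := ih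
  exact ENNReal.tsum_le_of_sum_range_le fun N => le_self_add.trans (hpartial N)

section

variable {Ω : Type*} {mΩ : MeasurableSpace Ω} {μ : Measure Ω}

theorem lintegral_natCast_le_tsum_measure {T : Ω → ℕ} {s : ℕ → Set Ω}
    (hs : ∀ n, MeasurableSet (s n)) (hT : ∀ᵐ ω ∂μ, ∀ n < T ω, ω ∈ s n) :
    ∫⁻ ω, (T ω : ℝ≥0∞) ∂μ ≤ ∑' n, μ (s n) := by
  calc ∫⁻ ω, (T ω : ℝ≥0∞) ∂μ ≤ ∫⁻ ω, ∑' n, (s n).indicator 1 ω ∂μ := by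
        refine lintegral_mono_ae (hT.mono fun ω hω => ?_)
        calc (T ω : ℝ≥0∞) = ∑ n ∈ Finset.range (T ω), (s n).indicator 1 ω := by
              rw [Finset.sum_congr rfl fun n hn =>
                Set.indicator_of_mem (hω n (Finset.mem_range.1 hn)) 1]
              simp
          _ ≤ ∑' n, (s n).indicator 1 ω := ENNReal.sum_le_tsum _
    _ = ∑' n, μ (s n) := by
        rw [lintegral_tsum fun n => (measurable_one.indicator (hs n)).aemeasurable]
        simp_rw [lintegral_indicator_one (hs _)]

end

section DrivenChain

variable {Ω α β : Type*} {mΩ : MeasurableSpace Ω} [MeasurableSpace α] [MeasurableSpace β]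
  {μ : Measure Ω} {ξ : ℕ → Ω → α}

abbrev pastMeasurableSpace (ξ : ℕ → Ω → α) (n : ℕ) : MeasurableSpace Ω :=
  ⨆ k ∈ Set.Iio n, MeasurableSpace.comap (ξ k) inferInstance

theorem pastMeasurableSpace_le (hξ : ∀ n, Measurable[mΩ] (ξ n)) (n : ℕ) :
    pastMeasurableSpace ξ n ≤ mΩ :=
  iSup₂_le fun k _ => (hξ k).comap_le

theorem pastMeasurableSpace_mono : Monotone (pastMeasurableSpace ξ) :=
  fun _ _ hmn => biSup_mono fun _ hk => Set.Iio_subset_Iio hmn hk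

theorem measurable_pastMeasurableSpace {k n : ℕ} (hkn : k < n) :
    Measurable[pastMeasurableSpace ξ n] (ξ k) :=
  Measurable.of_comap_le (le_iSup₂ (f := fun k (_ : k ∈ Set.Iio n) =>
    MeasurableSpace.comap (ξ k) inferInstance) k hkn)

theorem indep_pastMeasurableSpace (hξ : ∀ n, Measurable[mΩ] (ξ n))
    (hind : iIndepFun ξ μ) (n : ℕ) :
    Indep (pastMeasurableSpace ξ n) (MeasurableSpace.comap (ξ n) inferInstance) μ := by
  have := indep_iSup_of_disjoint (fun k => (hξ k).comap_le)
    ((iIndepFun_iff_iIndep _ _ _).1 hind)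
    (Set.disjoint_singleton_right.2 (lt_irrefl n) : Disjoint (Set.Iio n) {n})
  rwa [iSup_singleton] at this

def survivalSet (X : ℕ → Ω → β) (G : Set β) (n : ℕ) : Set Ω :=
  {ω | ∀ k ≤ n, X k ω ∈ G}

variable {step : β → α → β} {X : ℕ → Ω → β} {x₀ : β}

theorem measurable_pastMeasurableSpace_chain (hstep : Measurable (Function.uncurry step))
    (hX0 : ∀ ω, X 0 ω = x₀) (hX : ∀ n ω, X (n + 1) ω = step (X n ω) (ξ n ω)) (n : ℕ) :
    Measurable[pastMeasurableSpace ξ n] (X n) := by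
  induction n with
  | zero =>
    rw [show X 0 = fun _ => x₀ from funext hX0]
    exact measurable_const
  | succ n ih =>
    rw [show X (n + 1) = fun ω => step (X n ω) (ξ n ω) from funext (hX n)]
    exact hstep.comp ((ih.mono (pastMeasurableSpace_mono n.le_succ) le_rfl).prodMk
      (measurable_pastMeasurableSpace n.lt_succ_self))

theorem measurableSet_pastMeasurableSpace_survivalSet (hstep : Measurable (Function.uncurry step))
    (hX0 : ∀ ω, X 0 ω = x₀) (hX : ∀ n ω, X (n + 1) ω = step (X n ω) (ξ n ω))
    {G : Set β} (hG : MeasurableSet G) (n : ℕ) :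
    MeasurableSet[pastMeasurableSpace ξ n] (survivalSet X G n) := by
  simp only [survivalSet, Set.ofPred_forall]
  refine MeasurableSet.iInter fun k => MeasurableSet.iInter fun hk => ?_
  exact (measurable_pastMeasurableSpace_chain hstep hX0 hX k).mono
    (pastMeasurableSpace_mono hk) le_rfl hG

theorem setLIntegral_survivalSet_succ_add_measure_le [IsFiniteMeasure μ]
    (hξ : ∀ n, Measurable[mΩ] (ξ n)) (hind : iIndepFun ξ μ)
    (hstep : Measurable (Function.uncurry step))
    (hX0 : ∀ ω, X 0 ω = x₀) (hX : ∀ n ω, X (n + 1) ω = step (X n ω) (ξ n ω))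
    {G : Set β} (hG : MeasurableSet G) {V : β → ℝ≥0∞} (hV : Measurable V)
    (hdrift : ∀ n, ∀ x ∈ G, ∫⁻ ω, V (step x (ξ n ω)) ∂μ + 1 ≤ V x) (n : ℕ) :
    ∫⁻ ω in survivalSet X G (n + 1), V (X (n + 1) ω) ∂μ + μ (survivalSet X G n)
      ≤ ∫⁻ ω in survivalSet X G n, V (X n ω) ∂μ := by
  set E := survivalSet X G n
  have hℱ := pastMeasurableSpace_le hξ n
  have hE := measurableSet_pastMeasurableSpace_survivalSet hstep hX0 hX hG n
  have hXn := measurable_pastMeasurableSpace_chain hstep hX0 hX n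
  have hsub : survivalSet X G (n + 1) ⊆ E := fun ω hω k hk => hω k (hk.trans n.le_succ)
  calc ∫⁻ ω in survivalSet X G (n + 1), V (X (n + 1) ω) ∂μ + μ E
      ≤ ∫⁻ ω in E, V (step (X n ω) (ξ n ω)) ∂μ + μ E := by
        simp only [hX]
        gcongr
    _ = ∫⁻ ω in E, (∫⁻ ω', V (step (X n ω) (ξ n ω')) ∂μ + 1) ∂μ := by
        rw [setLIntegral_comp_eq_setLIntegral_lintegral_of_indep hℱ
          (indep_pastMeasurableSpace hξ hind n) hE hXn (hξ n)
          (h := fun p => V (step p.1 p.2)) (hV.comp hstep),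
          lintegral_add_right _ measurable_const, setLIntegral_one]
    _ ≤ ∫⁻ ω in E, V (X n ω) ∂μ :=
        setLIntegral_mono (hV.comp (hXn.mono hℱ le_rfl)) fun ω hω => hdrift n _ (hω n le_rfl)

theorem lintegral_le_of_drift [IsProbabilityMeasure μ]
    (hξ : ∀ n, Measurable[mΩ] (ξ n)) (hind : iIndepFun ξ μ)
    (hstep : Measurable (Function.uncurry step))
    (hX0 : ∀ ω, X 0 ω = x₀) (hX : ∀ n ω, X (n + 1) ω = step (X n ω) (ξ n ω))
    {G : Set β} (hG : MeasurableSet G) {V : β → ℝ≥0∞} (hV : Measurable V)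
    (hdrift : ∀ n, ∀ x ∈ G, ∫⁻ ω, V (step x (ξ n ω)) ∂μ + 1 ≤ V x)
    {T : Ω → ℕ} (hT : ∀ᵐ ω ∂μ, ∀ n < T ω, X n ω ∈ G) :
    ∫⁻ ω, (T ω : ℝ≥0∞) ∂μ ≤ V x₀ := by
  have hsurv n : MeasurableSet (survivalSet X G n) :=
    pastMeasurableSpace_le hξ n _ (measurableSet_pastMeasurableSpace_survivalSet hstep hX0 hX hG n)
  calc ∫⁻ ω, (T ω : ℝ≥0∞) ∂μ ≤ ∑' n, μ (survivalSet X G n) :=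
        lintegral_natCast_le_tsum_measure hsurv
          (hT.mono fun ω hω n hn k hk => hω k (hk.trans_lt hn))
    _ ≤ ∫⁻ ω in survivalSet X G 0, V (X 0 ω) ∂μ := ENNReal.tsum_le_of_succ_add_le
        (setLIntegral_survivalSet_succ_add_measure_le hξ hind hstep hX0 hX hG hV hdrift)
    _ ≤ ∫⁻ _, V x₀ ∂μ := by
        simp only [hX0]
        exact setLIntegral_le_lintegral _ _
    _ = V x₀ := by simp

end DrivenChain

section FiniteLaw

variable {Ω α : Type*} {mΩ : MeasurableSpace Ω} [MeasurableSpace α] [MeasurableSingletonClass α]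
  {μ : Measure Ω} {Z : Ω → α} {s : Finset α}

theorem ae_mem_of_sum_measure_preimage_singleton_eq_one [IsProbabilityMeasure μ]
    (hZ : Measurable Z) (hs : ∑ w ∈ s, μ (Z ⁻¹' {w}) = 1) : ∀ᵐ ω ∂μ, Z ω ∈ s := by
  rw [sum_measure_preimage_singleton s fun w _ => hZ (measurableSet_singleton w)] at hs
  exact (prob_compl_eq_zero_iff (hZ s.measurableSet)).2 hs

theorem lintegral_comp_eq_sum_of_ae_mem (hZ : Measurable Z) (hs : ∀ᵐ ω ∂μ, Z ω ∈ s)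
    {f : α → ℝ≥0∞} (hf : Measurable f) :
    ∫⁻ ω, f (Z ω) ∂μ = ∑ w ∈ s, f w * μ (Z ⁻¹' {w}) := by
  have hmap : ∀ᵐ w ∂μ.map Z, w ∈ (s : Set α) := (ae_map_iff hZ.aemeasurable s.measurableSet).2 hs
  rw [← lintegral_map hf hZ, ← Measure.restrict_eq_self_of_ae_mem hmap, lintegral_finset]
  simp_rw [Measure.map_apply hZ (measurableSet_singleton _)]

end FiniteLaw

def tieSteps : Finset (ℤ × ℤ × ℤ) := {(-1, 0, 0), (1, -1, 0), (0, 1, -1), (0, 0, 1)}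

def posOrthant : Set (ℤ × ℤ × ℤ) := {p | 0 < p.1 ∧ 0 < p.2.1 ∧ 0 < p.2.2}

def tiePotential (p : ℤ × ℤ × ℤ) : ℤ := 2 * p.2.1 * (p.1 + p.2.2 - 1)

theorem sum_tiePotential_add_add_four (p : ℤ × ℤ × ℤ) :
    ∑ w ∈ tieSteps, tiePotential (p + w) + 4 = 4 * tiePotential p := by
  rw [tieSteps, Finset.sum_insert (by decide), Finset.sum_insert (by decide),
    Finset.sum_pair (by decide)]
  simp only [tiePotential, Prod.fst_add, Prod.snd_add]
  ring

theorem tiePotential_add_nonneg {p w : ℤ × ℤ × ℤ} (hp : p ∈ posOrthant) (hw : w ∈ tieSteps) :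
    0 ≤ tiePotential (p + w) := by
  obtain ⟨hx, hy, hz⟩ := hp
  simp only [tieSteps, Finset.mem_insert, Finset.mem_singleton] at hw
  rcases hw with rfl | rfl | rfl | rfl <;>
    simp only [tiePotential, Prod.fst_add, Prod.snd_add] <;> nlinarith

def tiePotentialENNReal (p : ℤ × ℤ × ℤ) : ℝ≥0∞ := (tiePotential p).toNat

theorem sum_tiePotentialENNReal_add_add_four {p : ℤ × ℤ × ℤ} (hp : p ∈ posOrthant) :
    ∑ w ∈ tieSteps, tiePotentialENNReal (p + w) + 4 = 4 * tiePotentialENNReal p := by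
  have hnonneg : 0 ≤ tiePotential p := by
    obtain ⟨hx, hy, hz⟩ := hp
    unfold tiePotential
    nlinarith
  suffices h : ∑ w ∈ tieSteps, (tiePotential (p + w)).toNat + 4 = 4 * (tiePotential p).toNat by
    unfold tiePotentialENNReal
    exact_mod_cast h
  zify
  rw [Finset.sum_congr rfl fun w hw => Int.toNat_of_nonneg (tiePotential_add_nonneg hp hw),
    Int.toNat_of_nonneg hnonneg, sum_tiePotential_add_add_four]

theorem add_mem_posOrthant {p w : ℤ × ℤ × ℤ} (hp : p ∈ posOrthant) (hw : w ∈ tieSteps)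
    (hpw : (p + w).1 * (p + w).2.1 * (p + w).2.2 ≠ 0) : p + w ∈ posOrthant := by
  obtain ⟨hx, hy, hz⟩ := hp
  simp only [ne_eq, mul_eq_zero, not_or] at hpw
  simp only [tieSteps, Finset.mem_insert, Finset.mem_singleton] at hw
  rcases hw with rfl | rfl | rfl | rfl <;>
    simp only [posOrthant, Set.mem_ofPred_eq, Prod.fst_add, Prod.snd_add] at hpw ⊢ <;> omega

theorem mem_posOrthant_of_lt_sInf {x w : ℕ → ℤ × ℤ × ℤ} (hx0 : x 0 ∈ posOrthant)
    (hx : ∀ n, x (n + 1) = x n + w n) (hw : ∀ n, w n ∈ tieSteps) {n : ℕ}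
    (hn : n < sInf {k | (x k).1 * (x k).2.1 * (x k).2.2 = 0}) : x n ∈ posOrthant := by
  induction n with
  | zero => exact hx0
  | succ n ih =>
    have hne := Nat.notMem_of_lt_sInf hn
    rw [Set.mem_ofPred_eq, hx] at hne
    rw [hx]
    exact add_mem_posOrthant (ih (by omega)) (hw n) hne

section StepLaw

variable {Ω : Type*} {mΩ : MeasurableSpace Ω} {μ : Measure Ω} {Z : Ω → ℤ × ℤ × ℤ}

theorem ae_mem_tieSteps [IsProbabilityMeasure μ] (hZ : Measurable Z)
    (hlaw : ∀ w ∈ tieSteps, μ (Z ⁻¹' {w}) = 4⁻¹) : ∀ᵐ ω ∂μ, Z ω ∈ tieSteps := by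
  refine ae_mem_of_sum_measure_preimage_singleton_eq_one hZ ?_
  rw [Finset.sum_congr rfl hlaw, Finset.sum_const, show tieSteps.card = 4 from rfl, nsmul_eq_mul]
  exact ENNReal.mul_inv_cancel (by norm_num) (by norm_num)

theorem lintegral_tiePotentialENNReal_add_add_one (hZ : Measurable Z)
    (hae : ∀ᵐ ω ∂μ, Z ω ∈ tieSteps) (hlaw : ∀ w ∈ tieSteps, μ (Z ⁻¹' {w}) = 4⁻¹)
    {p : ℤ × ℤ × ℤ} (hp : p ∈ posOrthant) :
    ∫⁻ ω, tiePotentialENNReal (p + Z ω) ∂μ + 1 = tiePotentialENNReal p := by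
  rw [lintegral_comp_eq_sum_of_ae_mem hZ hae (f := fun w => tiePotentialENNReal (p + w))
    (measurable_of_countable _), Finset.sum_congr rfl fun w hw => by rw [hlaw w hw],
    ← Finset.sum_mul]
  calc (∑ w ∈ tieSteps, tiePotentialENNReal (p + w)) * 4⁻¹ + 1
      = (∑ w ∈ tieSteps, tiePotentialENNReal (p + w) + 4) * 4⁻¹ := by
        rw [add_mul, ENNReal.mul_inv_cancel (by norm_num) (by norm_num)]
    _ = tiePotentialENNReal p := by
        rw [sum_tiePotentialENNReal_add_add_four hp, mul_comm, ← mul_assoc,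
          ENNReal.inv_mul_cancel (by norm_num) (by norm_num), one_mul]

end StepLaw

theorem tiePotentialENNReal_natCast (a b : ℕ) (ha : 0 < a) :
    tiePotentialENNReal (a, b, a) = ((2 * b * (2 * a - 1) : ℕ) : ℝ≥0∞) := by
  have h : tiePotential (a, b, a) = ((2 * b * (2 * a - 1) : ℕ) : ℤ) := by
    simp only [tiePotential]
    push_cast [Nat.cast_sub (by omega : 1 ≤ 2 * a)]
    ring
  rw [tiePotentialENNReal, h, Int.toNat_natCast]

/-- For `m = 4` teams with initial gaps `(a, b, a)`, the expected value
of the first tie time `T` satisfies `E[T] ≤ 4b(a - 1/2) = 2b(2a - 1)`. -/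
theorem stmt_3 (a b : ℕ) (ha : 0 < a) (hb : 0 < b)
{Ω : Type*} [MeasurableSpace Ω] (μ : Measure Ω) [IsProbabilityMeasure μ]
    (ξ : ℕ → Ω → ℤ × ℤ × ℤ)
    (hmeas : ∀ n, Measurable (ξ n))
    (hindep : iIndepFun ξ μ)
    (hunif : ∀ n, ∀ v ∈ ({(-1, 0, 0), (1, -1, 0), (0, 1, -1), (0, 0, 1)} : Set (ℤ × ℤ × ℤ)),
      μ {ω | ξ n ω = v} = 1 / 4)
    (A B C : ℕ → Ω → ℤ)
    (hA : ∀ n ω, A (n + 1) ω = A n ω + (ξ n ω).1)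
    (hB : ∀ n ω, B (n + 1) ω = B n ω + (ξ n ω).2.1)
    (hC : ∀ n ω, C (n + 1) ω = C n ω + (ξ n ω).2.2)
    (T : Ω → ℕ)
    (hT : ∀ ω, T ω = sInf {n | A n ω * B n ω * C n ω = 0})
    (hA0 : ∀ ω, A 0 ω = (a : ℤ)) (hB0 : ∀ ω, B 0 ω = (b : ℤ)) (hC0 : ∀ ω, C 0 ω = (a : ℤ)) :
    ∫⁻ ω, (T ω : ℝ≥0∞) ∂μ ≤ ((2 * b * (2 * a - 1) : ℕ) : ℝ≥0∞) := by
  set X : ℕ → Ω → ℤ × ℤ × ℤ := fun n ω => (A n ω, B n ω, C n ω)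
  have hX0 : ∀ ω, X 0 ω = ((a : ℤ), (b : ℤ), (a : ℤ)) := fun ω => by simp [X, hA0, hB0, hC0]
  have hX : ∀ n ω, X (n + 1) ω = X n ω + ξ n ω := fun n ω => by
    simp only [X, hA, hB, hC]
    rfl
  have hlaw : ∀ n, ∀ w ∈ tieSteps, μ (ξ n ⁻¹' {w}) = 4⁻¹ := fun n w hw =>
    (hunif n w (by simpa [tieSteps] using hw)).trans (one_div 4)
  have hae n : ∀ᵐ ω ∂μ, ξ n ω ∈ tieSteps := ae_mem_tieSteps (hmeas n) (hlaw n)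
  have hX0pos : ∀ ω, X 0 ω ∈ posOrthant := fun ω => by
    simp only [hX0, posOrthant, Set.mem_ofPred_eq]
    exact ⟨by exact_mod_cast ha, by exact_mod_cast hb, by exact_mod_cast ha⟩
  have hpos : ∀ᵐ ω ∂μ, ∀ n < T ω, X n ω ∈ posOrthant := by
    filter_upwards [ae_all_iff.2 hae] with ω hω n hn
    rw [hT] at hn
    exact mem_posOrthant_of_lt_sInf (x := fun k => X k ω) (hX0pos ω) (hX · ω) hω hn
  calc ∫⁻ ω, (T ω : ℝ≥0∞) ∂μ ≤ tiePotentialENNReal (a, b, a) :=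
        lintegral_le_of_drift hmeas hindep measurable_add hX0 hX
          (Set.to_countable posOrthant).measurableSet (measurable_of_countable _)
          (fun n x hx =>
            (lintegral_tiePotentialENNReal_add_add_one (hmeas n) (hae n) (hlaw n) hx).le) hpos
    _ = ((2 * b * (2 * a - 1) : ℕ) : ℝ≥0∞) := tiePotentialENNReal_natCast a b ha
end

section
/- For each i ∈ {1,2,…,m−2}, the process M_i(n) = A_i(n)·A_{i+1}(n) + n/m is a martingale with respect to the filtration (F_n), i.e. E[M_i(n+1) | F_n] = M_i(n) for every n ≥ 0. -/
/-!
The increment `M_i(n+1) - M_i(n)` equals `A_i ξ_{i+1} + A_{i+1} ξ_i + ξ_i ξ_{i+1} + 1/m`, where `ξ`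
is the step taken at time `n`. That step is independent of `ℱ n` and uniform on the `m` step
vectors; each coordinate of the step vectors sums to zero, and `ξ_i ξ_{i+1}` is `-1` for the step
`e_i - e_{i+1}` and `0` for all others. Pulling out the `ℱ n`-measurable factors `A_i`, `A_{i+1}`
therefore leaves a conditional mean of `0 + 0 + (-1/m + 1/m) = 0`. Integrability comes for free:
`A(n)` is an integer vector plus a sum of finitely many bounded steps, and its coordinates times
the independent step are integrable by independence.
-/

open MeasureTheory ProbabilityTheory Filter
open scoped ENNReal

/-- The `m` possible step vectors of the competition process on the `m - 1` gaps
(0-indexed): `step m 0 = -e₀`, `step m k = e_{k-1} - e_k` for `0 < k < m - 1`, and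
`step m (m-1) = e_{m-2}`. -/
def step (m : ℕ) (k : Fin m) : Fin (m - 1) → ℤ := fun j =>
  (if (j : ℕ) + 1 = (k : ℕ) then 1 else 0) - (if (j : ℕ) = (k : ℕ) then 1 else 0)

open Finset

lemma Fin.sum_ite_eq_val {R : Type*} [AddCommMonoid R] {m c : ℕ} (hc : c < m) (r : R) :
    ∑ k : Fin m, (if c = (k : ℕ) then r else 0) = r := by
  rw [Fin.sum_univ_eq_sum_range (fun k => if c = k then r else 0), sum_ite_eq,
    if_pos (mem_range.2 hc)]

lemma sum_step_apply (m : ℕ) (j : Fin (m - 1)) : ∑ k : Fin m, step m k j = 0 := by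
  simp only [step, sum_sub_distrib, Fin.sum_ite_eq_val (show (j : ℕ) + 1 < m by omega),
    Fin.sum_ite_eq_val (show (j : ℕ) < m by omega), sub_self]

lemma sum_step_mul_step_apply_succ {m : ℕ} {i j : Fin (m - 1)} (hij : (j : ℕ) = i + 1) :
    ∑ k : Fin m, step m k i * step m k j = -1 := by
  have h : ∀ k : Fin m, step m k i * step m k j = -if (j : ℕ) = k then 1 else 0 := by
    intro k
    simp only [step, hij]
    split_ifs <;> omega
  simp only [h, sum_neg_distrib, Fin.sum_ite_eq_val (show (j : ℕ) < m by omega)]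

lemma step_injective (m : ℕ) : Function.Injective (step m) := by
  intro k l h
  by_contra hne
  have hne' : (k : ℕ) ≠ l := Fin.val_ne_of_ne hne
  wlog hkl : (k : ℕ) < l generalizing k l
  · exact this h.symm (Ne.symm hne) hne'.symm (by omega)
  have := congrFun h ⟨k, by omega⟩
  simp only [step] at this
  split_ifs at this <;> omega

section UniformLaw

variable {Ω α : Type*} [MeasurableSpace Ω] [MeasurableSpace α] [MeasurableSingletonClass α]
  {μ : Measure Ω} [IsProbabilityMeasure μ] {m : ℕ} {f : Ω → α} {v : Fin m → α}

lemma measurableSet_eq_of_measurable (hf : Measurable f) (a : α) : MeasurableSet {ω | f ω = a} :=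
  hf (measurableSet_singleton a)

lemma ae_mem_range_of_measure_eq (hm : m ≠ 0) (hf : Measurable f) (hv : Function.Injective v)
    (hμ : ∀ k, μ {ω | f ω = v k} = 1 / m) : ∀ᵐ ω ∂μ, f ω ∈ Set.range v := by
  have hs : MeasurableSet {ω | f ω ∈ Set.range v} := hf (Set.finite_range v).measurableSet
  rw [ae_iff_measure_eq hs.nullMeasurableSet, measure_univ, Set.range_eq_iUnion]
  simp only [Set.mem_iUnion, Set.mem_singleton_iff, Set.ofPred_exists]
  rw [measure_iUnion
    (fun k l hkl => Set.disjoint_left.2 fun ω hk hl => hkl (hv (hk.symm.trans hl)))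
    fun k => measurableSet_eq_of_measurable hf (v k), tsum_fintype]
  simp only [hμ, sum_const, card_univ, Fintype.card_fin, nsmul_eq_mul, one_div]
  exact ENNReal.mul_inv_cancel (by exact_mod_cast hm) (ENNReal.natCast_ne_top m)

lemma comp_ae_eq_sum_indicator {E : Type*} [AddCommMonoid E] (hm : m ≠ 0) (hf : Measurable f)
    (hv : Function.Injective v) (hμ : ∀ k, μ {ω | f ω = v k} = 1 / m) (φ : α → E) :
    (fun ω => φ (f ω)) =ᵐ[μ] ∑ k, {ω | f ω = v k}.indicator fun _ => φ (v k) := by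
  filter_upwards [ae_mem_range_of_measure_eq hm hf hv hμ] with ω ⟨k, hk⟩
  rw [Finset.sum_apply, sum_eq_single k (fun l _ hlk => Set.indicator_of_notMem
      (fun hl => hlk (hv (hl.symm.trans hk.symm))) _) (by simp),
    Set.indicator_of_mem (show ω ∈ {ω | f ω = v k} from hk.symm), hk]

lemma integrable_comp_of_measure_eq (hm : m ≠ 0) (hf : Measurable f) (hv : Function.Injective v)
    (hμ : ∀ k, μ {ω | f ω = v k} = 1 / m) (φ : α → ℝ) : Integrable (fun ω => φ (f ω)) μ :=
  (integrable_finsetSum' _ fun k _ => (integrable_const (φ (v k))).indicator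
    (measurableSet_eq_of_measurable hf (v k))).congr (comp_ae_eq_sum_indicator hm hf hv hμ φ).symm

lemma integral_comp_of_measure_eq (hm : m ≠ 0) (hf : Measurable f) (hv : Function.Injective v)
    (hμ : ∀ k, μ {ω | f ω = v k} = 1 / m) (φ : α → ℝ) :
    ∫ ω, φ (f ω) ∂μ = (∑ k, φ (v k)) / m := by
  rw [integral_congr_ae (comp_ae_eq_sum_indicator hm hf hv hμ φ), sum_div]
  simp only [Finset.sum_apply]
  rw [integral_finsetSum _ fun k _ => (integrable_const (φ (v k))).indicator
    (measurableSet_eq_of_measurable hf (v k))]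
  refine sum_congr rfl fun k _ => ?_
  rw [integral_indicator_const _ (measurableSet_eq_of_measurable hf (v k)), measureReal_def, hμ k]
  simp [div_eq_inv_mul]

end UniformLaw

section PastSigmaAlgebra

variable {Ω β : Type*} [mβ : MeasurableSpace β] {ξ : ℕ → Ω → β}

lemma iSup_comap_range_le [mΩ : MeasurableSpace Ω] (hξ : ∀ k, Measurable (ξ k)) (n : ℕ) :
    ⨆ k ∈ range n, mβ.comap (ξ k) ≤ mΩ :=
  iSup₂_le fun k _ => (hξ k).comap_le

lemma measurable_iSup_comap_range {k n : ℕ} (hk : k < n) :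
    Measurable[⨆ k ∈ range n, mβ.comap (ξ k)] (ξ k) :=
  Measurable.of_comap_le (le_iSup₂_of_le (f := fun k (_ : k ∈ range n) => mβ.comap (ξ k)) k
    (mem_range.2 hk) le_rfl)

lemma measurable_iSup_comap_range_of_add [Add β] [MeasurableAdd₂ β] {A : ℕ → Ω → β} {c : β}
    (hA0 : ∀ ω, A 0 ω = c) (hA : ∀ n ω, A (n + 1) ω = A n ω + ξ n ω) (n : ℕ) :
    Measurable[⨆ k ∈ range n, mβ.comap (ξ k)] (A n) := by
  induction n with
  | zero => simp [funext hA0]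
  | succ n ih =>
    have hmono : ⨆ k ∈ range n, mβ.comap (ξ k) ≤ ⨆ k ∈ range (n + 1), mβ.comap (ξ k) :=
      biSup_mono fun k hk => range_subset_range.2 n.le_succ hk
    rw [show A (n + 1) = A n + ξ n from funext (hA n)]
    exact (ih.mono hmono le_rfl).add (measurable_iSup_comap_range n.lt_succ_self)

lemma indep_comap_iSup_comap_range [MeasurableSpace Ω] {μ : Measure Ω}
    (hξ : ∀ k, Measurable (ξ k)) (hindep : iIndepFun ξ μ) (n : ℕ) :
    Indep (mβ.comap (ξ n)) (⨆ k ∈ range n, mβ.comap (ξ k)) μ := by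
  have h := indep_iSup_of_disjoint (fun k => (hξ k).comap_le) hindep.iIndep
    (S := {n}) (T := {k | k < n}) (by simp)
  simpa using h

end PastSigmaAlgebra

section Independence

variable {Ω β : Type*} {ℱ mΩ : MeasurableSpace Ω} [mβ : MeasurableSpace β] {μ : Measure Ω}
  {ζ : Ω → β} {X : Ω → ℝ} {φ : β → ℝ}

lemma integrable_mul_comp_of_indep (hind : Indep (mβ.comap ζ) ℱ μ)
    (hX : StronglyMeasurable[ℱ] X) (hXi : Integrable X μ) (hφ : Measurable φ)
    (hφi : Integrable (fun ω => φ (ζ ω)) μ) : Integrable (fun ω => X ω * φ (ζ ω)) μ := by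
  have hindXφ : X ⟂ᵢ[μ] fun ω => φ (ζ ω) := by
    rw [IndepFun_iff_Indep]
    exact (indep_of_indep_of_le_left (indep_of_indep_of_le_right hind hX.measurable.comap_le)
      (hφ.comp (Measurable.of_comap_le le_rfl)).comap_le).symm
  exact hindXφ.integrable_mul hXi hφi

variable [IsFiniteMeasure μ]

lemma condExp_comp_of_indep (hℱ : ℱ ≤ mΩ) (hζ : Measurable ζ) (hind : Indep (mβ.comap ζ) ℱ μ)
    (hφ : Measurable φ) : μ[fun ω => φ (ζ ω)|ℱ] =ᵐ[μ] fun _ => ∫ ω, φ (ζ ω) ∂μ :=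
  condExp_indep_eq hζ.comap_le hℱ (hφ.comp (Measurable.of_comap_le le_rfl)).stronglyMeasurable hind

lemma condExp_mul_comp_of_indep (hℱ : ℱ ≤ mΩ) (hζ : Measurable ζ)
    (hind : Indep (mβ.comap ζ) ℱ μ) (hX : StronglyMeasurable[ℱ] X) (hXi : Integrable X μ)
    (hφ : Measurable φ) (hφi : Integrable (fun ω => φ (ζ ω)) μ) :
    μ[fun ω => X ω * φ (ζ ω)|ℱ] =ᵐ[μ] fun ω => X ω * ∫ ω', φ (ζ ω') ∂μ := by
  filter_upwards [condExp_mul_of_stronglyMeasurable_left (g := fun ω => φ (ζ ω)) hX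
      (integrable_mul_comp_of_indep hind hX hXi hφ hφi) hφi,
    condExp_comp_of_indep hℱ hζ hind hφ] with ω h1 h2
  rw [← h2]
  exact h1

end Independence

lemma integrable_intCast_apply_of_add {Ω ι : Type*} [MeasurableSpace Ω] {μ : Measure Ω}
    [IsFiniteMeasure μ] {A ξ : ℕ → Ω → ι → ℤ} {c : ι → ℤ} (hA0 : ∀ ω, A 0 ω = c)
    (hA : ∀ n ω, A (n + 1) ω = A n ω + ξ n ω) (hξ : ∀ n l, Integrable (fun ω => (ξ n ω l : ℝ)) μ)
    (n : ℕ) (l : ι) : Integrable (fun ω => (A n ω l : ℝ)) μ := by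
  induction n with
  | zero => simp [hA0]
  | succ n ih =>
    simp only [hA, Pi.add_apply, Int.cast_add]
    exact ih.add (hξ n l)

lemma condExp_succ_ae_eq_of_condExp_increment_ae_eq_zero {Ω : Type*} {mΩ : MeasurableSpace Ω}
    {μ : Measure Ω} [IsFiniteMeasure μ] {ℱ : ℕ → MeasurableSpace Ω} (hℱ : ∀ n, ℱ n ≤ mΩ)
    {M D : ℕ → Ω → ℝ} (hMD : ∀ n, M (n + 1) = M n + D n)
    (hM0 : Integrable (M 0) μ) (hM : ∀ n, StronglyMeasurable[ℱ n] (M n))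
    (hDi : ∀ n, Integrable (D n) μ) (hD : ∀ n, μ[D n|ℱ n] =ᵐ[μ] 0) (n : ℕ) :
    μ[M (n + 1)|ℱ n] =ᵐ[μ] M n := by
  have hMi : ∀ n, Integrable (M n) μ := fun n => by
    induction n with
    | zero => exact hM0
    | succ n ih => exact hMD n ▸ ih.add (hDi n)
  filter_upwards [condExp_add (hMi n) (hDi n) (ℱ n), hD n] with ω h1 h2
  rw [hMD, h1, Pi.add_apply, condExp_of_stronglyMeasurable (hℱ n) (hM n) (hMi n), h2,
    Pi.zero_apply, add_zero]

/-- `(x i + u i) * (x j + u j) - x i * x j + 1 / m`: the change of `M_i` when the gaps move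
from `x` by the step `u`. -/
noncomputable def prodIncrement (m : ℕ) (i j : Fin (m - 1)) (x u : Fin (m - 1) → ℤ) : ℝ :=
  (x i : ℝ) * u j + (x j : ℝ) * u i + ((u i : ℝ) * u j + 1 / m)

section UniformStep

variable {Ω : Type*} {ℱ mΩ : MeasurableSpace Ω} {μ : Measure Ω} [IsProbabilityMeasure μ] {m : ℕ}
  {ζ : Ω → Fin (m - 1) → ℤ}

lemma integral_step_apply (hm : m ≠ 0) (hζ : Measurable ζ)
    (hμ : ∀ k, μ {ω | ζ ω = step m k} = 1 / m) (l : Fin (m - 1)) :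
    ∫ ω, (ζ ω l : ℝ) ∂μ = 0 := by
  rw [integral_comp_of_measure_eq hm hζ (step_injective m) hμ fun u => (u l : ℝ)]
  simp [← Int.cast_sum, sum_step_apply]

lemma integral_step_mul_step_apply_succ_add (hm : m ≠ 0) (hζ : Measurable ζ)
    (hμ : ∀ k, μ {ω | ζ ω = step m k} = 1 / m) {i j : Fin (m - 1)} (hij : (j : ℕ) = i + 1) :
    ∫ ω, ((ζ ω i : ℝ) * ζ ω j + 1 / m) ∂μ = 0 := by
  rw [integral_comp_of_measure_eq hm hζ (step_injective m) hμ
    fun u => (u i : ℝ) * u j + 1 / m, sum_add_distrib]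
  simp [← Int.cast_mul, ← Int.cast_sum, sum_step_mul_step_apply_succ hij, hm]

lemma integrable_mul_step_apply (hm : m ≠ 0) (hζ : Measurable ζ)
    (hμ : ∀ k, μ {ω | ζ ω = step m k} = 1 / m)
    (hind : Indep (MeasurableSpace.comap ζ inferInstance) ℱ μ) {X : Ω → Fin (m - 1) → ℤ}
    (hX : Measurable[ℱ] X) (hXi : ∀ l, Integrable (fun ω => (X ω l : ℝ)) μ) (l l' : Fin (m - 1)) :
    Integrable (fun ω => (X ω l : ℝ) * ζ ω l') μ :=
  integrable_mul_comp_of_indep (φ := fun u => (u l' : ℝ)) hind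
    ((measurable_of_countable fun u : Fin (m - 1) → ℤ => (u l : ℝ)).comp hX).stronglyMeasurable
    (hXi l) (measurable_of_countable _)
    (integrable_comp_of_measure_eq hm hζ (step_injective m) hμ fun u => (u l' : ℝ))

lemma condExp_mul_step_apply (hℱ : ℱ ≤ mΩ) (hm : m ≠ 0) (hζ : Measurable ζ)
    (hμ : ∀ k, μ {ω | ζ ω = step m k} = 1 / m)
    (hind : Indep (MeasurableSpace.comap ζ inferInstance) ℱ μ) {X : Ω → Fin (m - 1) → ℤ}
    (hX : Measurable[ℱ] X) (hXi : ∀ l, Integrable (fun ω => (X ω l : ℝ)) μ) (l l' : Fin (m - 1)) :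
    μ[fun ω => (X ω l : ℝ) * ζ ω l'|ℱ] =ᵐ[μ] 0 := by
  filter_upwards [condExp_mul_comp_of_indep (φ := fun u => (u l' : ℝ)) hℱ hζ hind
    ((measurable_of_countable fun u : Fin (m - 1) → ℤ => (u l : ℝ)).comp hX).stronglyMeasurable
    (hXi l) (measurable_of_countable _)
    (integrable_comp_of_measure_eq hm hζ (step_injective m) hμ fun u => (u l' : ℝ))] with ω h
  refine h.trans ?_
  rw [integral_step_apply hm hζ hμ, mul_zero, Pi.zero_apply]

lemma condExp_step_mul_step_apply_succ_add (hℱ : ℱ ≤ mΩ) (hm : m ≠ 0) (hζ : Measurable ζ)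
    (hμ : ∀ k, μ {ω | ζ ω = step m k} = 1 / m)
    (hind : Indep (MeasurableSpace.comap ζ inferInstance) ℱ μ) {i j : Fin (m - 1)}
    (hij : (j : ℕ) = i + 1) :
    μ[fun ω => (ζ ω i : ℝ) * ζ ω j + 1 / m|ℱ] =ᵐ[μ] 0 := by
  filter_upwards [condExp_comp_of_indep hℱ hζ hind
    (measurable_of_countable fun u : Fin (m - 1) → ℤ => (u i : ℝ) * u j + 1 / m)] with ω h
  rw [h, integral_step_mul_step_apply_succ_add hm hζ hμ hij, Pi.zero_apply]

lemma integrable_prodIncrement (hm : m ≠ 0) (hζ : Measurable ζ)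
    (hμ : ∀ k, μ {ω | ζ ω = step m k} = 1 / m)
    (hind : Indep (MeasurableSpace.comap ζ inferInstance) ℱ μ) {X : Ω → Fin (m - 1) → ℤ}
    (hX : Measurable[ℱ] X) (hXi : ∀ l, Integrable (fun ω => (X ω l : ℝ)) μ) (i j : Fin (m - 1)) :
    Integrable (fun ω => prodIncrement m i j (X ω) (ζ ω)) μ :=
  ((integrable_mul_step_apply hm hζ hμ hind hX hXi i j).add
    (integrable_mul_step_apply hm hζ hμ hind hX hXi j i)).add
    (integrable_comp_of_measure_eq hm hζ (step_injective m) hμ fun u => (u i : ℝ) * u j + 1 / m)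

lemma condExp_prodIncrement (hℱ : ℱ ≤ mΩ) (hm : m ≠ 0) (hζ : Measurable ζ)
    (hμ : ∀ k, μ {ω | ζ ω = step m k} = 1 / m)
    (hind : Indep (MeasurableSpace.comap ζ inferInstance) ℱ μ) {X : Ω → Fin (m - 1) → ℤ}
    (hX : Measurable[ℱ] X) (hXi : ∀ l, Integrable (fun ω => (X ω l : ℝ)) μ) {i j : Fin (m - 1)}
    (hij : (j : ℕ) = i + 1) :
    μ[fun ω => prodIncrement m i j (X ω) (ζ ω)|ℱ] =ᵐ[μ] 0 := by
  have hXζ := integrable_mul_step_apply hm hζ hμ hind hX hXi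
  filter_upwards [condExp_add ((hXζ i j).add (hXζ j i))
      (integrable_comp_of_measure_eq hm hζ (step_injective m) hμ
        fun u => (u i : ℝ) * u j + 1 / m) ℱ,
    condExp_add (hXζ i j) (hXζ j i) ℱ,
    condExp_mul_step_apply hℱ hm hζ hμ hind hX hXi i j,
    condExp_mul_step_apply hℱ hm hζ hμ hind hX hXi j i,
    condExp_step_mul_step_apply_succ_add hℱ hm hζ hμ hind hij] with ω h h' h1 h2 h3
  refine h.trans ?_
  rw [Pi.add_apply, h', Pi.add_apply, h1, h2, h3]
  simp

end UniformStep

theorem stmt_11_general (m : ℕ)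
{Ω : Type*} [MeasurableSpace Ω] (μ : Measure Ω) [IsProbabilityMeasure μ]
    (a : Fin (m - 1) → ℕ)
    (ξ : ℕ → Ω → (Fin (m - 1) → ℤ))
    (hmeas : ∀ n, Measurable (ξ n))
    (hindep : iIndepFun ξ μ)
    (hunif : ∀ n (k : Fin m), μ {ω | ξ n ω = step m k} = 1 / m)
    (A : ℕ → Ω → (Fin (m - 1) → ℤ))
    (hA0 : ∀ ω j, A 0 ω j = (a j : ℤ))
    (hA : ∀ n ω, A (n + 1) ω = A n ω + ξ n ω)
(ℱ : ℕ → MeasurableSpace Ω)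
    (hℱ : ∀ n, ℱ n = ⨆ k ∈ Finset.range n, MeasurableSpace.comap (ξ k) inferInstance)
    (i j : Fin (m - 1)) (hij : (j : ℕ) = (i : ℕ) + 1)
    (M : ℕ → Ω → ℝ)
    (hM : ∀ n ω, M n ω = ((A n ω i * A n ω j : ℤ) : ℝ) + (n : ℝ) / m) :
    ∀ n : ℕ, μ[M (n + 1)|ℱ n] =ᵐ[μ] M n := by
  have hm : m ≠ 0 := by omega
  have hle : ∀ n, ℱ n ≤ ‹_› := fun n => hℱ n ▸ iSup_comap_range_le hmeas n
  have hind : ∀ n, Indep (MeasurableSpace.comap (ξ n) inferInstance) (ℱ n) μ := fun n =>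
    hℱ n ▸ indep_comap_iSup_comap_range hmeas hindep n
  have hAmeas : ∀ n, Measurable[ℱ n] (A n) := fun n =>
    hℱ n ▸ measurable_iSup_comap_range_of_add (fun ω => funext (hA0 ω)) hA n
  have hAint : ∀ n l, Integrable (fun ω => (A n ω l : ℝ)) μ :=
    integrable_intCast_apply_of_add (fun ω => funext (hA0 ω)) hA fun n l =>
      integrable_comp_of_measure_eq hm (hmeas n) (step_injective m) (hunif n) fun u => (u l : ℝ)
  refine condExp_succ_ae_eq_of_condExp_increment_ae_eq_zero hle
    (D := fun n ω => prodIncrement m i j (A n ω) (ξ n ω)) ?_ ?_ ?_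
    (fun n => integrable_prodIncrement hm (hmeas n) (hunif n) (hind n) (hAmeas n) (hAint n) i j)
    fun n => condExp_prodIncrement (hle n) hm (hmeas n) (hunif n) (hind n) (hAmeas n) (hAint n) hij
  · intro n
    funext ω
    simp only [hM, hA, prodIncrement, Pi.add_apply]
    push_cast
    ring
  · refine (integrable_const ((a i * a j : ℤ) : ℝ)).congr (ae_of_all _ fun ω => ?_)
    simp [hM, hA0]
  · intro n
    rw [show M n = fun ω => ((A n ω i * A n ω j : ℤ) : ℝ) + (n : ℝ) / m from funext (hM n)]
    exact ((measurable_of_countable fun u : Fin (m - 1) → ℤ => ((u i * u j : ℤ) : ℝ) + n / m).comp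
      (hAmeas n)).stronglyMeasurable

/-- For each adjacent pair `i, j = i + 1` of gap indices, the process
`M_i n = A_i n * A_{i+1} n + n / m` is a martingale with respect to the filtration
generated by the steps. -/
theorem stmt_11 (m : ℕ) (hm : 3 ≤ m)
{Ω : Type*} [MeasurableSpace Ω] (μ : Measure Ω) [IsProbabilityMeasure μ]
    (a : Fin (m - 1) → ℕ) (ha : ∀ k, 0 < a k)
    (ξ : ℕ → Ω → (Fin (m - 1) → ℤ))
    (hmeas : ∀ n, Measurable (ξ n))
    (hindep : iIndepFun ξ μ)
    (hunif : ∀ n (k : Fin m), μ {ω | ξ n ω = step m k} = 1 / m)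
    (A : ℕ → Ω → (Fin (m - 1) → ℤ))
    (hA0 : ∀ ω j, A 0 ω j = (a j : ℤ))
    (hA : ∀ n ω, A (n + 1) ω = A n ω + ξ n ω)
(ℱ : ℕ → MeasurableSpace Ω)
    (hℱ : ∀ n, ℱ n = ⨆ k ∈ Finset.range n, MeasurableSpace.comap (ξ k) inferInstance)
    (i j : Fin (m - 1)) (hij : (j : ℕ) = (i : ℕ) + 1)
    (M : ℕ → Ω → ℝ)
    (hM : ∀ n ω, M n ω = ((A n ω i * A n ω j : ℤ) : ℝ) + (n : ℝ) / m) :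
    ∀ n : ℕ, μ[M (n + 1)|ℱ n] =ᵐ[μ] M n :=
  stmt_11_general m μ a ξ hmeas hindep hunif A hA0 hA ℱ hℱ i j hij M hM
end
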